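/- Let Z be a metric space and n, k integers. Suppose that for some ε̄ > 0 there exists a function δ : (0, ε̄) → (0,1] such that for every ε ∈ (0, ε̄) and every τ ∈ (0,1) there exists a (δ(ε)τ, ετ, k+1)-covering of Z × [0,τ]ⁿ by open subsets of Z × [0,∞)ⁿ (products with the l∞ metric). Then ℓ-dim(Z × [0,1]ⁿ) ≤ k. -/

import Mathlib

open Metric Set Filter ENNReal NNReal

noncomputable section

namespace PaperDefs

/-! ### Coverings: mesh, Lebesgue number, colorings, multiplicity -/

/-- The mesh of a family of subsets of a metric space. -/
def meshF {Z : Type*} [PseudoMetricSpace Z] (U : Set (Set Z)) : ℝ≥0∞ :=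
  ⨆ V ∈ U, EMetric.diam V

/-- The Lebesgue number of a family `U` as a covering of `A`:
`inf_{z ∈ A} sup_{V ∈ U} dist (z, Z \ V)`. -/
def lebesgueF {Z : Type*} [PseudoMetricSpace Z] (U : Set (Set Z)) (A : Set Z) : ℝ≥0∞ :=
  ⨅ z ∈ A, ⨆ V ∈ U, EMetric.infEdist z Vᶜ

def IsOpenFamily {Z : Type*} [TopologicalSpace Z] (U : Set (Set Z)) : Prop :=
  ∀ V ∈ U, IsOpen V

def IsCoveringOf {Z : Type*} (U : Set (Set Z)) (A : Set Z) : Prop :=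
  A ⊆ ⋃₀ U

/-- A family is `m`-colored if it is a union of `m` families, each consisting of
pairwise disjoint sets. -/
def IsColored {Z : Type*} (U : Set (Set Z)) (m : ℕ) : Prop :=
  ∃ F : Fin m → Set (Set Z), U = ⋃ i, F i ∧ ∀ i, (F i).Pairwise Disjoint

/-- The multiplicity of a family is at most `m`: any collection of its members with a
common point has cardinality at most `m`. -/
def MultiplicityLE {Z : Type*} (U : Set (Set Z)) (m : ℕ) : Prop :=
  ∀ s : Finset (Set Z), ↑s ⊆ U → (⋂₀ (s : Set (Set Z))).Nonempty → s.card ≤ m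

/-- An `(L, M, n)`-covering of `A`: an open `n`-colored covering with mesh at most `M`
and Lebesgue number at least `L`. -/
def IsLMNCover {Z : Type*} [PseudoMetricSpace Z] (U : Set (Set Z)) (A : Set Z)
    (L M : ℝ) (n : ℕ) : Prop :=
  IsOpenFamily U ∧ IsCoveringOf U A ∧ IsColored U n ∧
    meshF U ≤ ENNReal.ofReal M ∧ ENNReal.ofReal L ≤ lebesgueF U A

/-! ### Dimensions -/

/-- `ℓ-dim Z ≤ k`. -/
def ElldimLE (Z : Type*) [PseudoMetricSpace Z] (k : ℕ) : Prop :=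
  ∃ δ : ℝ, δ ∈ Set.Ioo (0:ℝ) 1 ∧ ∃ τ₀ : ℝ, 0 < τ₀ ∧ ∀ τ : ℝ, 0 < τ → τ < τ₀ →
    ∃ U : Set (Set Z), IsLMNCover U Set.univ (δ * τ) τ (k + 1)

/-- The linearly controlled dimension of a metric space. -/
def elldim (Z : Type*) [PseudoMetricSpace Z] : ℕ∞ :=
  sInf {n : ℕ∞ | ∃ k : ℕ, n = k ∧ ElldimLE Z k}

/-- `asdim X ≤ m`. -/
def AsdimLE (X : Type*) [PseudoMetricSpace X] (m : ℕ) : Prop :=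
  ∀ d : ℝ, 0 < d → ∃ U : Set (Set X), IsOpenFamily U ∧ IsCoveringOf U Set.univ ∧
    MultiplicityLE U (m + 1) ∧ meshF U < ⊤ ∧ ENNReal.ofReal d ≤ lebesgueF U Set.univ

/-- The asymptotic dimension of a metric space. -/
def asdim (X : Type*) [PseudoMetricSpace X] : ℕ∞ :=
  sInf {n : ℕ∞ | ∃ m : ℕ, n = m ∧ AsdimLE X m}

/-- `ℓ-asdim X ≤ n`. -/
def LasdimLE (X : Type*) [PseudoMetricSpace X] (n : ℕ) : Prop :=
  ∃ C : ℝ, 1 < C ∧ ∃ d₀ : ℝ, ∀ d : ℝ, d₀ ≤ d →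
    ∃ U : Set (Set X), IsLMNCover U Set.univ d (C * d) (n + 1)

/-- The linearly controlled asymptotic dimension of a metric space. -/
def lasdim (X : Type*) [PseudoMetricSpace X] : ℕ∞ :=
  sInf {n : ℕ∞ | ∃ m : ℕ, n = m ∧ LasdimLE X m}

/-- Topological covering dimension `≤ m`: every open covering admits an open refinement of
multiplicity at most `m + 1`. -/
def CovDimLE (Z : Type*) [TopologicalSpace Z] (m : ℕ) : Prop :=
  ∀ U : Set (Set Z), IsOpenFamily U → IsCoveringOf U Set.univ →
    ∃ V : Set (Set Z), IsOpenFamily V ∧ IsCoveringOf V Set.univ ∧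
      (∀ W ∈ V, ∃ W' ∈ U, W ⊆ W') ∧ MultiplicityLE V (m + 1)

/-- Topological covering dimension. -/
def covDim (Z : Type*) [TopologicalSpace Z] : ℕ∞ :=
  sInf {n : ℕ∞ | ∃ m : ℕ, n = m ∧ CovDimLE Z m}

/-! ### Scaled metric spaces and uniform `ℓ-dim` for families -/

/-- `Scaled a X` is the metric space obtained from `X` by multiplying all distances by `a`. -/
def Scaled (a : ℝ≥0) (X : Type*) : Type _ := X

def Scaled.unmk {a : ℝ≥0} {X : Type*} (x : Scaled a X) : X := x

def Scaled.dist' (a : ℝ≥0) {X : Type*} [PseudoMetricSpace X] (x y : Scaled a X) : ℝ :=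
  a * dist x.unmk y.unmk

noncomputable instance Scaled.pseudoMetricSpace (a : ℝ≥0) (X : Type*) [PseudoMetricSpace X] :
    PseudoMetricSpace (Scaled a X) where
  dist := Scaled.dist' a
  dist_self x := by simp [Scaled.dist']
  dist_comm x y := by simp [Scaled.dist', dist_comm]
  dist_triangle x y z := by
    have h := dist_triangle x.unmk y.unmk z.unmk
    have h2 := mul_le_mul_of_nonneg_left h a.coe_nonneg
    simp only [Scaled.dist']
    calc (a : ℝ) * dist x.unmk z.unmk ≤ a * (dist x.unmk y.unmk + dist y.unmk z.unmk) := h2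
      _ = a * dist x.unmk y.unmk + a * dist y.unmk z.unmk := by ring

/-- A family of metric spaces has `ℓ-dim ≤ k` uniformly. -/
def UnifElldimLE {ι : Type*} (Z : ι → Type*) [∀ i, PseudoMetricSpace (Z i)] (k : ℕ) : Prop :=
  ∃ δ : ℝ, δ ∈ Set.Ioo (0:ℝ) 1 ∧ ∃ τ₀ : ℝ, 0 < τ₀ ∧ ∀ τ : ℝ, 0 < τ → τ < τ₀ → ∀ i : ι,
    ∃ U : Set (Set (Z i)), IsLMNCover U Set.univ (δ * τ) τ (k + 1)

/-! ### `mesh^×` and `L^×` for products -/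

/-- `mesh^× U ≤ (p, q)`. -/
def MeshProdLE {X Y : Type*} [PseudoMetricSpace X] [PseudoMetricSpace Y]
    (U : Set (Set (X × Y))) (p q : ℝ) : Prop :=
  ∀ V ∈ U, ∃ x : X, ∃ y : Y, V ⊆ closedBall x p ×ˢ closedBall y q

/-- `L^× U ≥ (p, q)`. -/
def LProdGE {X Y : Type*} [PseudoMetricSpace X] [PseudoMetricSpace Y]
    (U : Set (Set (X × Y))) (p q : ℝ) : Prop :=
  ∀ z : X × Y, ∃ V ∈ U, closedBall z.1 p ×ˢ closedBall z.2 q ⊆ V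

/-- pointed `mesh^× (U, z) ≤ (p, q)`. -/
def MeshProdAtLE {X Y : Type*} [PseudoMetricSpace X] [PseudoMetricSpace Y]
    (U : Set (Set (X × Y))) (z : X × Y) (p q : ℝ) : Prop :=
  ∀ V ∈ U, z ∈ V → ∃ x : X, ∃ y : Y, V ⊆ closedBall x p ×ˢ closedBall y q

/-- pointed `L^× (U, z) ≥ (p, q)`. -/
def LProdAtGE {X Y : Type*} [PseudoMetricSpace X] [PseudoMetricSpace Y]
    (U : Set (Set (X × Y))) (z : X × Y) (p q : ℝ) : Prop :=
  ∃ V ∈ U, closedBall z.1 p ×ˢ closedBall z.2 q ⊆ V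

/-! ### Hyperbolic spaces and their boundaries -/

/-- The Gromov product `(x|y)_o`. -/
def gromov {Z : Type*} [PseudoMetricSpace Z] (o x y : Z) : ℝ :=
  (dist x o + dist y o - dist x y) / 2

/-- `X` is `δ`-hyperbolic. -/
def IsDeltaHyperbolic (X : Type*) [PseudoMetricSpace X] (δ : ℝ) : Prop :=
  0 ≤ δ ∧ ∀ o x y z : X, min (gromov o x z) (gromov o z y) - δ ≤ gromov o x y

/-- `X` is Gromov hyperbolic. -/
def GromovHyperbolic (X : Type*) [PseudoMetricSpace X] : Prop :=
  ∃ δ : ℝ, IsDeltaHyperbolic X δ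

/-- A sequence converges at infinity if `liminf_{i,j → ∞} (x_i | x_j)_o = ∞`. -/
def ConvAtInf {X : Type*} [PseudoMetricSpace X] (o : X) (x : ℕ → X) : Prop :=
  Tendsto (fun p : ℕ × ℕ => gromov o (x p.1) (x p.2)) (atTop ×ˢ atTop) atTop

/-- Sequences converging at infinity. -/
def BdrySeq (X : Type*) [PseudoMetricSpace X] (o : X) := {x : ℕ → X // ConvAtInf o x}

/-- Equivalence of sequences converging at infinity. -/
def bdryRel (X : Type*) [PseudoMetricSpace X] (o : X) (x y : BdrySeq X o) : Prop :=
  Tendsto (fun p : ℕ × ℕ => gromov o (x.1 p.1) (y.1 p.2)) (atTop ×ˢ atTop) atTop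

/-- The boundary at infinity of `X` (with respect to the base point `o`). -/
def Boundary (X : Type*) [PseudoMetricSpace X] (o : X) := Quot (bdryRel X o)

/-- The Gromov product of two boundary points. -/
def bGromov {X : Type*} [PseudoMetricSpace X] (o : X) (ξ η : Boundary X o) : ℝ :=
  sInf {t : ℝ | ∃ x y : BdrySeq X o, Quot.mk (bdryRel X o) x = ξ ∧ Quot.mk (bdryRel X o) y = η ∧
    t = liminf (fun p : ℕ × ℕ => gromov o (x.1 p.1) (y.1 p.2)) (atTop ×ˢ atTop)}

/-- The Gromov product of a point of the space and a boundary point. -/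
def mGromov {X : Type*} [PseudoMetricSpace X] (o : X) (x : X) (ξ : Boundary X o) : ℝ :=
  sInf {t : ℝ | ∃ y : BdrySeq X o, Quot.mk (bdryRel X o) y = ξ ∧
    t = liminf (fun j : ℕ => gromov o x (y.1 j)) atTop}

/-- A hyperbolic space is visual. -/
def IsVisualSpace (X : Type*) [PseudoMetricSpace X] : Prop :=
  ∃ x₀ : X, ∃ D : ℝ, 0 < D ∧ ∀ x : X, ∃ ξ : Boundary X x₀,
    dist x x₀ ≤ mGromov x₀ x ξ + D

/-- `B` is a copy of the boundary at infinity of `X` (realized by the bijection `φ`)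
equipped with a visual metric. -/
def IsVisualBoundary (X : Type*) [PseudoMetricSpace X] (o : X)
    (B : Type*) [PseudoMetricSpace B] (φ : B ≃ Boundary X o) : Prop :=
  ∃ a : ℝ, 1 < a ∧ ∃ c₁ c₂ : ℝ, 0 < c₁ ∧ 0 < c₂ ∧ ∀ ξ ξ' : B,
    c₁ * a ^ (-(bGromov o (φ ξ) (φ ξ'))) ≤ dist ξ ξ' ∧
    dist ξ ξ' ≤ c₂ * a ^ (-(bGromov o (φ ξ) (φ ξ')))

/-- A geodesic from `x` to `y`: an isometric parametrization of `[0, dist x y]`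
sending `0` to `x` and `dist x y` to `y`. -/
def IsGeodesicFrom {Z : Type*} [PseudoMetricSpace Z] (f : ℝ → Z) (x y : Z) : Prop :=
  f 0 = x ∧ f (dist x y) = y ∧ ∀ s ∈ Set.Icc (0:ℝ) (dist x y), ∀ t ∈ Set.Icc (0:ℝ) (dist x y),
    dist (f s) (f t) = |s - t|

/-- A geodesic metric space. -/
def IsGeodesicSpace (X : Type*) [PseudoMetricSpace X] : Prop :=
  ∀ x y : X, ∃ f : ℝ → X, IsGeodesicFrom f x y

/-! ### Word metrics and hyperbolic groups -/

/-- The word length of `g` with respect to the (symmetrized) generating set `S`. -/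
def wordLength {G : Type*} [Group G] (S : Set G) (g : G) : ℕ :=
  sInf {n : ℕ | ∃ w : List G, w.length = n ∧ (∀ s ∈ w, s ∈ S ∨ s⁻¹ ∈ S) ∧ w.prod = g}

/-- The metric on `G` is the word metric of the finite generating set `S`. -/
def IsWordMetric {G : Type*} [Group G] [PseudoMetricSpace G] (S : Set G) : Prop :=
  S.Finite ∧ Subgroup.closure S = ⊤ ∧ ∀ g h : G, dist g h = wordLength S (g⁻¹ * h)

/-! ### Hyperbolic cones -/

/-- The inverse hyperbolic cosine. -/
def arcosh (x : ℝ) : ℝ := Real.log (x + Real.sqrt (x ^ 2 - 1))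

/-- The hyperbolic cone distance between points of `Z × [0, ∞)`, where `Z` is a bounded
metric space of positive diameter:
`cosh d = cosh t · cosh t' − sinh t · sinh t' · cos (μ |z z'|)` with `μ = π / diam Z`. -/
def coneDist {Z : Type*} [PseudoMetricSpace Z] (p q : Z × ℝ≥0) : ℝ :=
  arcosh (Real.cosh p.2 * Real.cosh q.2 -
    Real.sinh p.2 * Real.sinh q.2 *
      Real.cos (Real.pi / Metric.diam (Set.univ : Set Z) * dist p.1 q.1))

/-- `C` is (a realization of) the hyperbolic cone over `Z`: `h` is the canonical projection
of `Z × [0, ∞)` onto `C = Z × [0,∞) / Z × {0}`, and the metric of `C` is the hyperbolic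
cone metric. -/
def IsHypCone (Z : Type*) [PseudoMetricSpace Z] (C : Type*) [PseudoMetricSpace C]
    (h : Z × ℝ≥0 → C) : Prop :=
  Function.Surjective h ∧ ∀ p q : Z × ℝ≥0, dist (h p) (h q) = coneDist p q

/-- A metric space is locally self-similar. -/
def LocallySelfSimilar (Z : Type*) [PseudoMetricSpace Z] : Prop :=
  ∃ lam : ℝ, 1 ≤ lam ∧ ∃ R₀ : ℝ, 1 < R₀ ∧ ∀ R : ℝ, R₀ ≤ R → ∀ A : Set Z,
    Metric.diam A ≤ 1 / R → ∃ f : A → Z, ∀ x y : A,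
      R * dist (x : Z) (y : Z) / lam ≤ dist (f x) (f y) ∧
      dist (f x) (f y) ≤ lam * R * dist (x : Z) (y : Z)

end PaperDefs

open PaperDefs

set_option linter.unusedSectionVars false


namespace AuxGlue
open EMetric

variable {Y : Type*} [PseudoMetricSpace Y]

/-- Shrinking a set: points whose distance to the complement exceeds `r`. -/
def shrink (r : ℝ≥0∞) (V : Set Y) : Set Y := {y | r < EMetric.infEdist y Vᶜ}

lemma isOpen_shrink (r : ℝ≥0∞) (V : Set Y) : IsOpen (shrink r V) :=
  isOpen_Ioi.preimage continuous_infEdist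

lemma shrink_subset (r : ℝ≥0∞) (V : Set Y) : shrink r V ⊆ V := by
  intro y hy
  by_contra hyV
  have : EMetric.infEdist y Vᶜ = 0 := infEdist_zero_of_mem hyV
  simp only [shrink, mem_setOf_eq, this] at hy
  exact (not_lt_of_ge (zero_le : (0:ℝ≥0∞) ≤ r)) hy

lemma shrink_sep {r : ℝ≥0∞} {V V' : Set Y} (hd : Disjoint V V')
    {p q : Y} (hp : p ∈ shrink r V) (hq : q ∈ shrink r V') : r ≤ edist p q := by
  have hqV : q ∈ Vᶜ := fun hqV => (Set.disjoint_left.mp hd hqV (shrink_subset r V' hq))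
  exact le_trans hp.le (infEdist_le_edist_of_mem hqV)

lemma shrink_lebesgue {r : ℝ≥0∞} (hr : r ≠ ⊤) {V : Set Y} {z : Y}
    (h : r + r ≤ EMetric.infEdist z Vᶜ) : r ≤ EMetric.infEdist z (shrink r V)ᶜ := by
  refine le_infEDist.mpr ?_
  intro q hq
  simp only [shrink, mem_compl_iff, mem_setOf_eq, not_lt] at hq
  have h2 : r + r ≤ edist z q + EMetric.infEdist q Vᶜ :=
    le_trans h (infEdist_le_edist_add_infEdist)
  have h3 : r + r ≤ edist z q + r := le_trans h2 (add_le_add_right hq _)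
  rw [add_comm (edist z q) r] at h3
  exact (ENNReal.add_le_add_iff_left hr).mp h3

/-- The star of `B` with respect to a family `Fi`. -/
def star (Fi : Set (Set Y)) (B : Set Y) : Set Y :=
  B ∪ ⋃₀ {A | A ∈ Fi ∧ (A ∩ B).Nonempty}

/-- The saturation of a fine family `Fi` into a coarse family `Gi`. -/
def satur (Fi Gi : Set (Set Y)) : Set (Set Y) :=
  {A | A ∈ Fi ∧ ∀ B ∈ Gi, A ∩ B = ∅} ∪ (star Fi) '' Gi

lemma subset_star_left (Fi : Set (Set Y)) (B : Set Y) : B ⊆ star Fi B := subset_union_left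

lemma subset_star_of_meets {Fi : Set (Set Y)} {A B : Set Y} (hA : A ∈ Fi)
    (h : (A ∩ B).Nonempty) : A ⊆ star Fi B :=
  le_trans (subset_sUnion_of_mem (show A ∈ {A | A ∈ Fi ∧ (A ∩ B).Nonempty} from ⟨hA, h⟩)) subset_union_right

lemma exists_superset_of_fine {Fi Gi : Set (Set Y)} {A : Set Y} (hA : A ∈ Fi) :
    ∃ C ∈ satur Fi Gi, A ⊆ C := by
  by_cases h : ∀ B ∈ Gi, A ∩ B = ∅
  · exact ⟨A, Or.inl ⟨hA, h⟩, subset_rfl⟩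
  · push_neg at h
    obtain ⟨B, hB, hAB⟩ := h
    exact ⟨star Fi B, Or.inr ⟨B, hB, rfl⟩, subset_star_of_meets hA hAB⟩

lemma exists_superset_of_coarse {Fi Gi : Set (Set Y)} {B : Set Y} (hB : B ∈ Gi) :
    ∃ C ∈ satur Fi Gi, B ⊆ C :=
  ⟨star Fi B, Or.inr ⟨B, hB, rfl⟩, subset_star_left Fi B⟩

lemma isOpen_satur {Fi Gi : Set (Set Y)} (hF : ∀ A ∈ Fi, IsOpen A) (hG : ∀ B ∈ Gi, IsOpen B) :
    ∀ C ∈ satur Fi Gi, IsOpen C := by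
  rintro C (⟨hC, -⟩ | ⟨B, hB, rfl⟩)
  · exact hF C hC
  · exact (hG B hB).union (isOpen_sUnion fun A hA => hF A hA.1)

/-- Every point of the star is within `μ` of `B`. -/
lemma star_close {Fi : Set (Set Y)} {μ : ℝ≥0∞} (hμ : ∀ A ∈ Fi, EMetric.diam A ≤ μ)
    {B : Set Y} {x : Y} (hx : x ∈ star Fi B) : ∃ b ∈ B, edist x b ≤ μ := by
  rcases hx with hx | hx
  · exact ⟨x, hx, by simp⟩
  · obtain ⟨A, ⟨hA, y, hyA, hyB⟩, hxA⟩ := hx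
    exact ⟨y, hyB, le_trans (edist_le_diam_of_mem hxA hyA) (hμ A hA)⟩

lemma diam_star {Fi : Set (Set Y)} {μ ν : ℝ≥0∞} (hμ : ∀ A ∈ Fi, EMetric.diam A ≤ μ)
    {B : Set Y} (hB : EMetric.diam B ≤ ν) : EMetric.diam (star Fi B) ≤ μ + ν + μ := by
  apply EMetric.diam_le
  intro x hx y hy
  obtain ⟨b, hb, hxb⟩ := star_close hμ hx
  obtain ⟨b', hb', hyb⟩ := star_close hμ hy
  calc edist x y ≤ edist x b + edist b b' + edist b' y := edist_triangle4 x b b' y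
    _ ≤ μ + ν + μ := by
        gcongr
        · exact le_trans (edist_le_diam_of_mem hb hb') hB
        · rw [edist_comm]; exact hyb

lemma pairwise_disjoint_satur {Fi Gi : Set (Set Y)} {μ s : ℝ≥0∞}
    (hμ : ∀ A ∈ Fi, EMetric.diam A ≤ μ)
    (hFdis : Fi.Pairwise Disjoint)
    (hGsep : ∀ B ∈ Gi, ∀ B' ∈ Gi, B ≠ B' → ∀ p ∈ B, ∀ q ∈ B', s ≤ edist p q)
    (h2 : μ + μ < s) :
    (satur Fi Gi).Pairwise Disjoint := by
  have keptStar : ∀ A, A ∈ Fi → (∀ B ∈ Gi, A ∩ B = ∅) → ∀ B ∈ Gi, Disjoint A (star Fi B) := by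
    intro A hA hAe B hB
    rw [Set.disjoint_left]
    intro x hxA hxS
    rcases hxS with hxB | ⟨A', ⟨hA', hA'B⟩, hxA'⟩
    · exact absurd (hAe B hB) (Set.nonempty_iff_ne_empty.mp ⟨x, hxA, hxB⟩)
    · have hne : A ≠ A' := by
        rintro rfl
        exact absurd (hAe B hB) (Set.nonempty_iff_ne_empty.mp hA'B)
      exact Set.disjoint_left.mp (hFdis hA hA' hne) hxA hxA'
  rintro C (⟨hC, hCe⟩ | ⟨B, hB, rfl⟩) C' (⟨hC', hC'e⟩ | ⟨B', hB', rfl⟩) hne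
  · exact hFdis hC hC' hne
  · exact keptStar C hC hCe B' hB'
  · exact (keptStar C' hC' hC'e B hB).symm
  · -- two stars
    have hBB' : B ≠ B' := by rintro rfl; exact hne rfl
    rw [Set.disjoint_left]
    intro x hx hx'
    obtain ⟨b, hb, hxb⟩ := star_close hμ hx
    obtain ⟨b', hb', hxb'⟩ := star_close hμ hx'
    have : s ≤ edist b b' := hGsep B hB B' hB' hBB' b hb b' hb'
    have : s ≤ μ + μ := le_trans this <|
      le_trans (edist_triangle b x b') (by rw [edist_comm b x]; exact add_le_add hxb hxb')
    exact absurd this (not_le_of_gt h2)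

end AuxGlue

namespace AuxGeom
open EMetric

abbrev Par (Z : Type*) (n : ℕ) := Z × (Fin n → (Set.Ici (0:ℝ)))

variable {Z : Type*} [MetricSpace Z] {n : ℕ}

lemma subtype_edist_eq (x y : ↥(Set.Ici (0:ℝ))) :
    edist x y = ENNReal.ofReal |(x:ℝ) - (y:ℝ)| := by
  rw [edist_dist, Subtype.dist_eq, Real.dist_eq]

lemma edist_X_eq (p q : Par Z n) :
    edist p q = max (edist p.1 q.1)
      (Finset.univ.sup fun i => ENNReal.ofReal |(p.2 i : ℝ) - (q.2 i : ℝ)|) := by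
  rw [Prod.edist_eq, edist_pi_def]
  congr 1
  refine Finset.sup_congr rfl fun i _ => subtype_edist_eq _ _

lemma edist_coord (p q : Par Z n) (i : Fin n) :
    ENNReal.ofReal |(p.2 i : ℝ) - (q.2 i : ℝ)| ≤ edist p q := by
  rw [edist_X_eq]
  exact le_sup_of_le_right
    (Finset.le_sup (f := fun i => ENNReal.ofReal |(p.2 i : ℝ) - (q.2 i : ℝ)|) (Finset.mem_univ i))

/-- Clamped translation along coordinate `a` by `t`. -/
def clamp (a : Fin n) (t : ℝ) (p : Par Z n) : Par Z n :=
  (p.1, fun i => if i = a then ⟨max ((p.2 a : ℝ) - t) 0, Set.mem_Ici.mpr (le_max_right _ _)⟩ else p.2 i)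

lemma clamp_fst (a : Fin n) (t : ℝ) (p : Par Z n) : (clamp a t p).1 = p.1 := rfl

lemma clamp_coord_a (a : Fin n) (t : ℝ) (p : Par Z n) :
    ((clamp a t p).2 a : ℝ) = max ((p.2 a : ℝ) - t) 0 := by
  simp [clamp]

lemma clamp_coord_ne (a : Fin n) (t : ℝ) (p : Par Z n) (i : Fin n) (h : i ≠ a) :
    (clamp a t p).2 i = p.2 i := by
  simp [clamp, h]

lemma abs_clamp_sub_clamp_le (x y t : ℝ) : |max (x - t) 0 - max (y - t) 0| ≤ |x - y| := by
  have := abs_max_sub_max_le_abs (x - t) (y - t) 0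
  simpa using this

lemma edist_clamp_le (a : Fin n) (t : ℝ) (p q : Par Z n) :
    edist (clamp a t p) (clamp a t q) ≤ edist p q := by
  rw [edist_X_eq, edist_X_eq]
  apply max_le_max le_rfl
  apply Finset.sup_le
  intro i _
  refine le_trans ?_ (Finset.le_sup (Finset.mem_univ i))
  rcases eq_or_ne i a with rfl | h
  · rw [clamp_coord_a, clamp_coord_a]
    exact ENNReal.ofReal_le_ofReal (abs_clamp_sub_clamp_le _ _ _)
  · rw [clamp_coord_ne a t p i h, clamp_coord_ne a t q i h]

lemma edist_clamp_eq (a : Fin n) (t : ℝ) (p q : Par Z n)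
    (hp : t ≤ (p.2 a : ℝ)) (hq : t ≤ (q.2 a : ℝ)) :
    edist (clamp a t p) (clamp a t q) = edist p q := by
  rw [edist_X_eq, edist_X_eq]
  congr 1
  refine Finset.sup_congr rfl fun i _ => ?_
  rcases eq_or_ne i a with rfl | h
  · rw [clamp_coord_a, clamp_coord_a, max_eq_left (by linarith), max_eq_left (by linarith)]
    congr 1
    ring_nf
  · rw [clamp_coord_ne a t p i h, clamp_coord_ne a t q i h]

lemma lipschitz_clamp (a : Fin n) (t : ℝ) : LipschitzWith 1 (clamp a t : Par Z n → Par Z n) := by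
  intro p q
  rw [ENNReal.coe_one, one_mul]
  exact edist_clamp_le a t p q

lemma continuous_clamp (a : Fin n) (t : ℝ) : Continuous (clamp a t : Par Z n → Par Z n) :=
  (lipschitz_clamp a t).continuous

lemma continuous_coordA (a : Fin n) : Continuous (fun p : Par Z n => (p.2 a : ℝ)) := by
  exact continuous_subtype_val.comp ((continuous_apply a).comp continuous_snd)

lemma isOpen_slab (a : Fin n) (c c' : ℝ) :
    IsOpen {p : Par Z n | c < (p.2 a : ℝ) ∧ (p.2 a : ℝ) < c'} := by
  have h1 : IsOpen {p : Par Z n | c < (p.2 a : ℝ)} := isOpen_Ioi.preimage (continuous_coordA a)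
  have h2 : IsOpen {p : Par Z n | (p.2 a : ℝ) < c'} := isOpen_Iio.preimage (continuous_coordA a)
  exact h1.inter h2

end AuxGeom

namespace AuxMain
open EMetric
open AuxGlue AuxGeom

variable {Z : Type*} [MetricSpace Z] {n : ℕ}

/-- The region `Z × ∏ [0, 1 or τ]`. -/
def T (j : ℕ) (τ : ℝ) : Set (Par Z n) :=
  {p | ∀ i : Fin n, (p.2 i : ℝ) ≤ if (i : ℕ) < j then 1 else τ}

/-- Trimmed translated covering member. -/
def trimSet (a : Fin n) (t c c' : ℝ) (V : Set (Par Z n)) : Set (Par Z n) :=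
  clamp a t ⁻¹' V ∩ {p | c < (p.2 a : ℝ) ∧ (p.2 a : ℝ) < c'}

lemma mem_trimSet {a : Fin n} {t c c' : ℝ} {V : Set (Par Z n)} {p : Par Z n} :
    p ∈ trimSet a t c c' V ↔ clamp a t p ∈ V ∧ c < (p.2 a : ℝ) ∧ (p.2 a : ℝ) < c' :=
  Iff.rfl

lemma isOpen_trimSet (a : Fin n) (t c c' : ℝ) {V : Set (Par Z n)} (hV : IsOpen V) :
    IsOpen (trimSet a t c c' V) :=
  ((hV.preimage (continuous_clamp a t))).inter (isOpen_slab a c c')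

lemma diam_trimSet (a : Fin n) {t c : ℝ} (c' : ℝ) (V : Set (Par Z n)) (htc : t ≤ max c 0) :
    EMetric.diam (trimSet a t c c' V) ≤ EMetric.diam V := by
  apply EMetric.diam_le
  intro p hp q hq
  have hp' : t ≤ (p.2 a : ℝ) := le_trans htc (max_le hp.2.1.le (p.2 a).2)
  have hq' : t ≤ (q.2 a : ℝ) := le_trans htc (max_le hq.2.1.le (q.2 a).2)
  rw [← edist_clamp_eq a t p q hp' hq']
  exact edist_le_diam_of_mem hp.1 hq.1

lemma infEdist_trimSet (a : Fin n) {t c c' : ℝ} {V : Set (Par Z n)} {z : Par Z n}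
    {L : ℝ≥0∞}
    (h1 : L ≤ EMetric.infEdist (clamp a t z) Vᶜ)
    (h2 : ∀ y : ℝ, (y ≤ c ∨ c' ≤ y) → L ≤ ENNReal.ofReal |(z.2 a : ℝ) - y|) :
    L ≤ EMetric.infEdist z (trimSet a t c c' V)ᶜ := by
  refine le_infEDist.mpr ?_
  intro q hq
  by_cases hqV : clamp a t q ∈ V
  · have hslab : (q.2 a : ℝ) ≤ c ∨ c' ≤ (q.2 a : ℝ) := by
      by_contra hcon
      push_neg at hcon
      exact hq (mem_trimSet.mpr ⟨hqV, hcon.1, hcon.2⟩)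
    exact le_trans (h2 _ hslab) (edist_coord z q a)
  · calc L ≤ EMetric.infEdist (clamp a t z) Vᶜ := h1
      _ ≤ edist (clamp a t z) (clamp a t q) := infEdist_le_edist_of_mem hqV
      _ ≤ edist z q := edist_clamp_le a t z q

/-- The inductive invariant. -/
def Good (Z : Type*) [MetricSpace Z] (n k : ℕ) (j : ℕ) : Prop :=
  ∃ E : ℝ, 0 < E ∧ E ≤ 1 ∧ ∀ ε : ℝ, 0 < ε → ε < E → ∃ d : ℝ, 0 < d ∧ d ≤ ε ∧
    ∀ τ : ℝ, 0 < τ → τ < 1 → ∃ F : Fin (k+1) → Set (Set (Par Z n)),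
      (∀ i, ∀ V ∈ F i, IsOpen V) ∧
      (∀ i, ∀ V ∈ F i, EMetric.diam V ≤ ENNReal.ofReal (ε * τ)) ∧
      (∀ i, ∀ V ∈ F i, ∀ V' ∈ F i, V ≠ V' → ∀ p ∈ V, ∀ q ∈ V',
        ENNReal.ofReal (d * τ) ≤ edist p q) ∧
      (∀ z ∈ T (Z := Z) (n := n) j τ, ∃ i, ∃ V ∈ F i,
        ENNReal.ofReal (d * τ) ≤ EMetric.infEdist z Vᶜ)

set_option maxHeartbeats 2000000 in
lemma good_step {k : ℕ} (j : ℕ) (hj : j < n) (hG : Good Z n k j) : Good Z n k (j+1) := by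
  classical
  obtain ⟨E, hE0, hE1, hmain⟩ := hG
  refine ⟨E, hE0, hE1, ?_⟩
  intro ε hε0 hεE
  obtain ⟨dc, hdc0, hdcε, hcovc⟩ := hmain (ε/2) (by positivity) (by linarith)
  obtain ⟨df, hdf0, hdfdc, hcovf⟩ := hmain (dc/100) (by positivity) (by linarith)
  have hdc1 : dc ≤ 1 := by linarith
  refine ⟨df/2, by positivity, by linarith, ?_⟩
  intro τ hτ0 hτ1
  obtain ⟨Fc, hFcO, hFcD, hFcS, hFcL⟩ := hcovc τ hτ0 hτ1
  obtain ⟨Ff, hFfO, hFfD, hFfS, hFfL⟩ := hcovf τ hτ0 hτ1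
  set a : Fin n := ⟨j, hj⟩ with ha
  set w : ℝ := dc * τ / 8 with hw
  have hw0 : 0 < w := by positivity
  have hwτ : 6 * w ≤ τ := by
    rw [hw]; nlinarith
  -- the two trimmed translated families
  set CC : Fin (k+1) → Set (Set (Par Z n)) := fun i =>
    ⋃ l : ℕ, (fun V => trimSet a (l*τ) (l*τ + w) ((l+1)*τ - w) V) '' (Fc i) with hCC
  set FF : Fin (k+1) → Set (Set (Par Z n)) := fun i =>
    ⋃ l : ℕ, (fun V => trimSet a (max (l*τ - 3*w) 0) (l*τ - 3*w) (l*τ + 3*w) V) '' (Ff i)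
    with hFF
  -- openness
  have hCCO : ∀ i, ∀ V ∈ CC i, IsOpen V := by
    rintro i V hV
    simp only [hCC, mem_iUnion, mem_image] at hV
    obtain ⟨l, V₀, hV₀, rfl⟩ := hV
    exact isOpen_trimSet _ _ _ _ (hFcO i V₀ hV₀)
  have hFFO : ∀ i, ∀ V ∈ FF i, IsOpen V := by
    rintro i V hV
    simp only [hFF, mem_iUnion, mem_image] at hV
    obtain ⟨l, V₀, hV₀, rfl⟩ := hV
    exact isOpen_trimSet _ _ _ _ (hFfO i V₀ hV₀)
  -- diameters
  have hCCD : ∀ i, ∀ V ∈ CC i, EMetric.diam V ≤ ENNReal.ofReal (ε/2 * τ) := by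
    rintro i V hV
    simp only [hCC, mem_iUnion, mem_image] at hV
    obtain ⟨l, V₀, hV₀, rfl⟩ := hV
    exact le_trans (diam_trimSet a _ _ (le_trans (by linarith) (le_max_left _ _))) (hFcD i V₀ hV₀)
  have hFFD : ∀ i, ∀ V ∈ FF i, EMetric.diam V ≤ ENNReal.ofReal (dc/100 * τ) := by
    rintro i V hV
    simp only [hFF, mem_iUnion, mem_image] at hV
    obtain ⟨l, V₀, hV₀, rfl⟩ := hV
    exact le_trans (diam_trimSet a _ _ le_rfl) (hFfD i V₀ hV₀)
  -- cross-slab separation helper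
  have cross : ∀ (b1 b2 : ℝ) (p q : Par Z n), (p.2 a : ℝ) < b1 → b2 ≤ (q.2 a : ℝ) →
      ENNReal.ofReal (b2 - b1) ≤ edist p q := by
    intro b1 b2 p q hp hq
    refine le_trans ?_ (edist_coord p q a)
    apply ENNReal.ofReal_le_ofReal
    rw [abs_sub_comm]
    calc b2 - b1 ≤ (q.2 a : ℝ) - (p.2 a : ℝ) := by linarith
      _ ≤ |(q.2 a : ℝ) - (p.2 a : ℝ)| := le_abs_self _
  -- separation of the coarse family
  have hCCS : ∀ i, ∀ B ∈ CC i, ∀ B' ∈ CC i, B ≠ B' → ∀ p ∈ B, ∀ q ∈ B',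
      ENNReal.ofReal (dc*τ/4) ≤ edist p q := by
    rintro i B hB B' hB' hne p hp q hq
    simp only [hCC, mem_iUnion, mem_image] at hB hB'
    obtain ⟨l, V, hV, rfl⟩ := hB
    obtain ⟨l', V', hV', rfl⟩ := hB'
    rcases lt_trichotomy l l' with hll' | rfl | hll'
    · have hcast : (l:ℝ) + 1 ≤ (l':ℝ) := by exact_mod_cast hll'
      have := cross ((l+1)*τ - w) (l'*τ + w) p q hp.2.2 (le_of_lt hq.2.1)
      refine le_trans ?_ this
      apply ENNReal.ofReal_le_ofReal
      have : (l+1:ℝ)*τ ≤ (l':ℝ)*τ := by nlinarith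
      rw [hw] at *
      nlinarith
    · -- same slab: distinct original sets
      have hVV' : V ≠ V' := by
        rintro rfl; exact hne rfl
      have hsep := hFcS i V hV V' hV' hVV' _ hp.1 _ hq.1
      rw [edist_clamp_eq a (l*τ) p q (by linarith [hp.2.1]) (by linarith [hq.2.1])] at hsep
      refine le_trans (ENNReal.ofReal_le_ofReal (by linarith)) hsep
    · have hcast : (l':ℝ) + 1 ≤ (l:ℝ) := by exact_mod_cast hll'
      have := cross ((l'+1)*τ - w) (l*τ + w) q p hq.2.2 (le_of_lt hp.2.1)
      rw [edist_comm]
      refine le_trans ?_ this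
      apply ENNReal.ofReal_le_ofReal
      have : (l'+1:ℝ)*τ ≤ (l:ℝ)*τ := by nlinarith
      rw [hw] at *
      nlinarith
  -- pairwise disjointness of the fine family
  have hFFdis : ∀ i, (FF i).Pairwise Disjoint := by
    intro i B hB B' hB' hne
    simp only [hFF, mem_iUnion, mem_image] at hB hB'
    obtain ⟨l, V, hV, rfl⟩ := hB
    obtain ⟨l', V', hV', rfl⟩ := hB'
    rw [Set.disjoint_left]
    intro x hx hx'
    rcases lt_trichotomy l l' with hll' | rfl | hll'
    · have hcast : (l:ℝ) + 1 ≤ (l':ℝ) := by exact_mod_cast hll'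
      have h1 : (x.2 a : ℝ) < l*τ + 3*w := hx.2.2
      have h2 : l'*τ - 3*w < (x.2 a : ℝ) := hx'.2.1
      have : (l+1:ℝ)*τ ≤ (l':ℝ)*τ := by nlinarith
      linarith
    · have hVV' : V ≠ V' := by rintro rfl; exact hne rfl
      have hsep := hFfS i V hV V' hV' hVV' _ hx.1 _ hx'.1
      simp only [edist_self] at hsep
      have h0 : ENNReal.ofReal (df * τ) = 0 := le_antisymm hsep zero_le
      rw [ENNReal.ofReal_eq_zero] at h0
      nlinarith
    · have hcast : (l':ℝ) + 1 ≤ (l:ℝ) := by exact_mod_cast hll'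
      have h1 : (x.2 a : ℝ) < l'*τ + 3*w := hx'.2.2
      have h2 : l*τ - 3*w < (x.2 a : ℝ) := hx.2.1
      have : (l'+1:ℝ)*τ ≤ (l:ℝ)*τ := by nlinarith
      linarith
  -- Lebesgue property of the glued family
  have hGlueL : ∀ z ∈ T (Z := Z) (n := n) (j+1) τ, ∃ i, ∃ C ∈ satur (FF i) (CC i),
      ENNReal.ofReal (df * τ) ≤ EMetric.infEdist z Cᶜ := by
    intro z hz
    set x : ℝ := (z.2 a : ℝ) with hxdef
    have hx0 : 0 ≤ x := (z.2 a).2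
    have hta : ¬ ((a : ℕ) < j) := by simp [ha]
    -- auxiliary: transferring membership in T (j+1) to T j after clamping
    have hmemT : ∀ t : ℝ, 0 ≤ t → max (x - t) 0 ≤ τ → clamp a t z ∈ T (Z := Z) (n := n) j τ := by
      intro t ht hxt i
      rcases eq_or_ne i a with rfl | hia
      · rw [clamp_coord_a, if_neg hta]
        exact hxt
      · rw [clamp_coord_ne a t z i hia]
        have hzi := hz i
        rcases lt_or_ge (i : ℕ) j with hij | hij
        · rw [if_pos hij]
          rw [if_pos (Nat.lt_succ_of_lt hij)] at hzi
          exact hzi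
        · have hij' : ¬ ((i:ℕ) < j + 1) := by
            intro hcon
            have : (i : ℕ) = j := by omega
            exact hia (Fin.ext (by simp [ha, this]))
          rw [if_neg (by omega)]
          rw [if_neg hij'] at hzi
          exact hzi
    -- zone case
    have zone : ∀ l : ℕ, (l:ℝ)*τ - 2*w ≤ x → x ≤ (l:ℝ)*τ + 2*w →
        ∃ i, ∃ C ∈ satur (FF i) (CC i), ENNReal.ofReal (df * τ) ≤ EMetric.infEdist z Cᶜ := by
      intro l hxl hxu
      have htfl : max ((l:ℝ)*τ - 3*w) 0 ≤ x + 3*w ∧ (l:ℝ)*τ - 3*w ≤ max ((l:ℝ)*τ - 3*w) 0 := by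
        constructor
        · apply max_le (by linarith) (by linarith)
        · exact le_max_left _ _
      have hclamp : max (x - max ((l:ℝ)*τ - 3*w) 0) 0 ≤ τ := by
        apply max_le ?_ (le_of_lt hτ0)
        have := htfl.2
        have h5 : x - ((l:ℝ)*τ - 3*w) ≤ 5*w := by linarith
        have : x - max ((l:ℝ)*τ - 3*w) 0 ≤ x - ((l:ℝ)*τ - 3*w) := by linarith [htfl.2]
        linarith
      obtain ⟨i, V, hV, hleb⟩ := hFfL _ (hmemT _ (le_max_right _ _) hclamp)
      refine ⟨i, ?_⟩
      have hC0 : trimSet a (max ((l:ℝ)*τ - 3*w) 0) ((l:ℝ)*τ - 3*w) ((l:ℝ)*τ + 3*w) V ∈ FF i := by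
        simp only [hFF, mem_iUnion, mem_image]
        exact ⟨l, V, hV, rfl⟩
      obtain ⟨C, hC, hsub⟩ := exists_superset_of_fine (Gi := CC i) hC0
      refine ⟨C, hC, ?_⟩
      refine le_trans ?_ (infEdist_anti (compl_subset_compl.mpr hsub))
      apply infEdist_trimSet a hleb
      intro y hy
      apply ENNReal.ofReal_le_ofReal
      have hdfw : df * τ ≤ w := by rw [hw]; nlinarith
      rcases hy with hy | hy
      · calc df * τ ≤ w := hdfw
          _ ≤ x - y := by linarith
          _ ≤ |x - y| := le_abs_self _
      · calc df * τ ≤ w := hdfw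
          _ ≤ y - x := by linarith
          _ ≤ |x - y| := by rw [abs_sub_comm]; exact le_abs_self _
    -- main case analysis
    set l0 : ℕ := ⌊x / τ⌋₊ with hl0
    have hxdl : (l0:ℝ)*τ ≤ x := by
      have h := Nat.floor_le (by positivity : (0:ℝ) ≤ x / τ)
      rw [← hl0] at h
      have h2 := mul_le_mul_of_nonneg_right h (le_of_lt hτ0)
      rw [div_mul_cancel₀ x (ne_of_gt hτ0)] at h2
      exact h2
    have hxdu : x < ((l0:ℝ)+1)*τ := by
      have h := Nat.lt_floor_add_one (x / τ)
      rw [← hl0] at h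
      have := (div_lt_iff₀ hτ0).mp h
      linarith
    rcases le_or_gt x ((l0:ℝ)*τ + 2*w) with hcase | hcase
    · exact zone l0 (by linarith) hcase
    rcases le_or_gt (((l0:ℝ)+1)*τ - 2*w) x with hcase2 | hcase2
    · refine zone (l0+1) ?_ ?_
      · push_cast; linarith
      · push_cast; linarith
    · -- bulk case
      have hclamp : max (x - (l0:ℝ)*τ) 0 ≤ τ := max_le (by linarith) (le_of_lt hτ0)
      obtain ⟨i, V, hV, hleb⟩ := hFcL _ (hmemT ((l0:ℝ)*τ) (by positivity) hclamp)
      have hleb' : ENNReal.ofReal (df*τ) ≤ EMetric.infEdist (clamp a ((l0:ℝ)*τ) z) Vᶜ := by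
        refine le_trans (ENNReal.ofReal_le_ofReal ?_) hleb
        nlinarith
      refine ⟨i, ?_⟩
      have hC0 : trimSet a ((l0:ℝ)*τ) ((l0:ℝ)*τ + w) (((l0:ℝ)+1)*τ - w) V ∈ CC i := by
        simp only [hCC, mem_iUnion, mem_image]
        exact ⟨l0, V, hV, by push_cast; ring_nf⟩
      obtain ⟨C, hC, hsub⟩ := exists_superset_of_coarse (Fi := FF i) hC0
      refine ⟨C, hC, ?_⟩
      refine le_trans ?_ (infEdist_anti (compl_subset_compl.mpr hsub))
      apply infEdist_trimSet a hleb'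
      intro y hy
      apply ENNReal.ofReal_le_ofReal
      have hdfw : df * τ ≤ w := by rw [hw]; nlinarith
      rcases hy with hy | hy
      · calc df * τ ≤ w := hdfw
          _ ≤ x - y := by linarith
          _ ≤ |x - y| := le_abs_self _
      · calc df * τ ≤ w := hdfw
          _ ≤ y - x := by linarith
          _ ≤ |x - y| := by rw [abs_sub_comm]; exact le_abs_self _
  -- final: shrink the saturation
  refine ⟨fun i => (shrink (ENNReal.ofReal (df*τ/2))) '' (satur (FF i) (CC i)),
    ?_, ?_, ?_, ?_⟩
  · rintro i V ⟨C, hC, rfl⟩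
    exact isOpen_shrink _ _
  · rintro i V ⟨C, hC, rfl⟩
    refine le_trans (EMetric.diam_mono (shrink_subset _ _)) ?_
    rcases hC with ⟨hCF, -⟩ | ⟨B, hB, rfl⟩
    · refine le_trans (hFFD i C hCF) (ENNReal.ofReal_le_ofReal ?_)
      nlinarith
    · refine le_trans (diam_star (hFFD i) (hCCD i B hB)) ?_
      rw [← ENNReal.ofReal_add (by positivity) (by positivity),
        ← ENNReal.ofReal_add (by positivity) (by positivity)]
      apply ENNReal.ofReal_le_ofReal
      nlinarith
  · rintro i V ⟨C, hC, rfl⟩ V' ⟨C', hC', rfl⟩ hne p hp q hq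
    have hCC' : C ≠ C' := by rintro rfl; exact hne rfl
    have hdisj : Disjoint C C' := by
      refine pairwise_disjoint_satur (hFFD i) (hFFdis i) (hCCS i) ?_ hC hC' hCC'
      rw [← ENNReal.ofReal_add (by positivity) (by positivity)]
      apply ENNReal.ofReal_lt_ofReal_iff_of_nonneg (by positivity) |>.mpr
      nlinarith
    have := shrink_sep hdisj hp hq
    refine le_trans (ENNReal.ofReal_le_ofReal (by nlinarith)) this
  · intro z hz
    obtain ⟨i, C, hC, hleb⟩ := hGlueL z hz
    refine ⟨i, shrink (ENNReal.ofReal (df*τ/2)) C, ⟨C, hC, rfl⟩, ?_⟩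
    have h2r : ENNReal.ofReal (df*τ/2) + ENNReal.ofReal (df*τ/2) ≤ EMetric.infEdist z Cᶜ := by
      rw [← ENNReal.ofReal_add (by positivity) (by positivity)]
      refine le_trans (ENNReal.ofReal_le_ofReal (by linarith)) hleb
    have := shrink_lebesgue (by simp) h2r
    refine le_trans (ENNReal.ofReal_le_ofReal (by linarith)) this


lemma mem_of_infEdist_pos {Y : Type*} [PseudoMetricSpace Y] {V : Set Y} {z : Y}
    (h : 0 < EMetric.infEdist z Vᶜ) : z ∈ V := by
  by_contra hz
  have h0 : EMetric.infEdist z Vᶜ = 0 := infEdist_zero_of_mem hz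
  rw [h0] at h
  exact lt_irrefl _ h

lemma good_zero {k : ℕ} (ε₀ : ℝ) (hε₀ : 0 < ε₀) (δ : ℝ → ℝ)
    (hδ : ∀ ε : ℝ, 0 < ε → ε < ε₀ → 0 < δ ε ∧ δ ε ≤ 1)
    (hcov : ∀ ε : ℝ, 0 < ε → ε < ε₀ → ∀ τ : ℝ, 0 < τ → τ < 1 →
      ∃ U : Set (Set (Par Z n)),
        PaperDefs.IsLMNCover U {p : Par Z n | ∀ i, (p.2 i : ℝ) ≤ τ} (δ ε * τ) (ε * τ) (k + 1)) :
    Good Z n k 0 := by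
  refine ⟨min ε₀ 1, by positivity, min_le_right _ _, ?_⟩
  intro ε hε0 hεE
  have hεε₀ : ε < ε₀ := lt_of_lt_of_le hεE (min_le_left _ _)
  obtain ⟨hδ0, hδ1⟩ := hδ ε hε0 hεε₀
  have hmin0 : 0 < min (δ ε) ε := lt_min hδ0 hε0
  refine ⟨min (δ ε) ε / 4, by positivity, by
    have := min_le_right (δ ε) ε; linarith, ?_⟩
  intro τ hτ0 hτ1
  obtain ⟨U, hUopen, hUcover, ⟨F, hUF, hFdis⟩, hmesh, hleb⟩ := hcov ε hε0 hεε₀ τ hτ0 hτ1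
  have hsub : ∀ i, F i ⊆ U := by
    intro i; rw [hUF]; exact subset_iUnion F i
  set r : ℝ≥0∞ := ENNReal.ofReal (min (δ ε) ε / 4 * τ) with hr
  refine ⟨fun i => shrink r '' F i, ?_, ?_, ?_, ?_⟩
  · rintro i V ⟨V₀, hV₀, rfl⟩
    exact isOpen_shrink _ _
  · rintro i V ⟨V₀, hV₀, rfl⟩
    refine le_trans (EMetric.diam_mono (shrink_subset _ _)) (le_trans ?_ hmesh)
    exact le_iSup₂ (f := fun V (_ : V ∈ U) => EMetric.diam V) V₀ (hsub i hV₀)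
  · rintro i V ⟨V₀, hV₀, rfl⟩ V' ⟨V₀', hV₀', rfl⟩ hne p hp q hq
    have hVV : V₀ ≠ V₀' := by rintro rfl; exact hne rfl
    exact shrink_sep (hFdis i hV₀ hV₀' hVV) hp hq
  · intro z hz
    have hzA : z ∈ {p : Par Z n | ∀ i, (p.2 i : ℝ) ≤ τ} := by
      intro i
      have := hz i
      simpa using this
    have h1 : ENNReal.ofReal (δ ε * τ) ≤ ⨆ V ∈ U, EMetric.infEdist z Vᶜ :=
      le_trans hleb (iInf₂_le z hzA)
    have h2 : ENNReal.ofReal (min (δ ε) ε / 2 * τ) < ENNReal.ofReal (δ ε * τ) := by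
      rw [ENNReal.ofReal_lt_ofReal_iff (by positivity)]
      have := min_le_left (δ ε) ε
      nlinarith
    have h3 := lt_of_lt_of_le h2 h1
    rw [lt_iSup_iff] at h3
    obtain ⟨V, hV⟩ := h3
    rw [lt_iSup_iff] at hV
    obtain ⟨hVU, hVlt⟩ := hV
    rw [hUF, mem_iUnion] at hVU
    obtain ⟨i, hVF⟩ := hVU
    refine ⟨i, shrink r V, ⟨V, hVF, rfl⟩, ?_⟩
    apply shrink_lebesgue (by rw [hr]; exact ENNReal.ofReal_ne_top)
    rw [hr, ← ENNReal.ofReal_add (by positivity) (by positivity)]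
    refine le_trans (ENNReal.ofReal_le_ofReal (by linarith)) hVlt.le

/-- The isometric embedding of `Z × [0,1]^n` into `Z × [0,∞)^n`. -/
def emb : (Z × (Fin n → Set.Icc (0:ℝ) 1)) → Par Z n :=
  fun p => (p.1, fun i => ⟨(p.2 i : ℝ), (p.2 i).2.1⟩)

lemma edist_emb (p q : Z × (Fin n → Set.Icc (0:ℝ) 1)) :
    edist (emb p) (emb q) = edist p q := by
  rw [Prod.edist_eq, Prod.edist_eq, edist_pi_def, edist_pi_def]
  congr 1

lemma lipschitz_emb : LipschitzWith 1 (emb (Z := Z) (n := n)) := by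
  intro p q
  rw [ENNReal.coe_one, one_mul, edist_emb]

lemma elldimLE_of_good {k : ℕ} (hG : Good Z n k n) :
    PaperDefs.ElldimLE (Z × (Fin n → Set.Icc (0:ℝ) 1)) k := by
  obtain ⟨E, hE0, hE1, hmain⟩ := hG
  obtain ⟨d, hd0, hdε, hcov⟩ := hmain (E/2) (by positivity) (by linarith)
  refine ⟨min (d/(E/2)) (1/2), ⟨by positivity, lt_of_le_of_lt (min_le_right _ _) (by norm_num)⟩,
    E/2, by positivity, ?_⟩
  intro s hs0 hsE
  set τ : ℝ := s / (E/2) with hτdef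
  have hτ0 : 0 < τ := by positivity
  have hτ1 : τ < 1 := by
    rw [hτdef, div_lt_one (by positivity)]
    exact hsE
  obtain ⟨F, hFO, hFD, hFS, hFL⟩ := hcov τ hτ0 hτ1
  have hwit : ∀ z : Z × (Fin n → Set.Icc (0:ℝ) 1), ∃ i, ∃ V ∈ F i,
      ENNReal.ofReal (d * τ) ≤ EMetric.infEdist (emb z) Vᶜ := by
    intro z
    apply hFL
    intro i
    rw [if_pos i.isLt]
    exact (z.2 i).2.2
  have hdτ : 0 < d * τ := by positivity
  refine ⟨⋃ i, (fun V => emb ⁻¹' V) '' F i, ?_, ?_, ?_, ?_, ?_⟩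
  · rintro V hV
    simp only [mem_iUnion, mem_image] at hV
    obtain ⟨i, V₀, hV₀, rfl⟩ := hV
    exact (hFO i V₀ hV₀).preimage lipschitz_emb.continuous
  · intro z _
    obtain ⟨i, V, hV, hle⟩ := hwit z
    have hzV : emb z ∈ V := mem_of_infEdist_pos (lt_of_lt_of_le (ENNReal.ofReal_pos.mpr hdτ) hle)
    exact ⟨emb ⁻¹' V, by simp only [mem_iUnion, mem_image]; exact ⟨i, V, hV, rfl⟩, hzV⟩
  · refine ⟨fun i => (fun V => emb ⁻¹' V) '' F i, rfl, ?_⟩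
    rintro i V ⟨V₀, hV₀, rfl⟩ V' ⟨V₀', hV₀', rfl⟩ hne
    have hVV : V₀ ≠ V₀' := by rintro rfl; exact hne rfl
    rw [Set.disjoint_left]
    intro x hx hx'
    have hsep := hFS i V₀ hV₀ V₀' hV₀' hVV _ hx _ hx'
    simp only [edist_self] at hsep
    have h0 : ENNReal.ofReal (d * τ) = 0 := le_antisymm hsep zero_le
    rw [ENNReal.ofReal_eq_zero] at h0
    linarith
  · refine iSup₂_le ?_
    rintro V hV
    simp only [mem_iUnion, mem_image] at hV
    obtain ⟨i, V₀, hV₀, rfl⟩ := hV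
    have hd1 : EMetric.diam (emb ⁻¹' V₀) ≤ EMetric.diam V₀ := by
      apply EMetric.diam_le
      intro p hp q hq
      rw [← edist_emb]
      exact edist_le_diam_of_mem hp hq
    refine le_trans hd1 (le_trans (hFD i V₀ hV₀) (ENNReal.ofReal_le_ofReal ?_))
    have hEτ : E/2 * τ = s := by
      rw [hτdef]
      field_simp
    exact le_of_eq hEτ
  · refine le_iInf₂ ?_
    intro z _
    obtain ⟨i, V, hV, hle⟩ := hwit z
    have hkey : ENNReal.ofReal (min (d/(E/2)) (1/2) * s) ≤ EMetric.infEdist z (emb ⁻¹' V)ᶜ := by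
      refine le_infEDist.mpr ?_
      intro q hq
      have hq' : emb q ∈ Vᶜ := hq
      calc ENNReal.ofReal (min (d/(E/2)) (1/2) * s) ≤ ENNReal.ofReal (d * τ) := by
            apply ENNReal.ofReal_le_ofReal
            rw [hτdef]
            have h1 : min (d/(E/2)) (1/2) ≤ d/(E/2) := min_le_left _ _
            have h2 : d * (s/(E/2)) = (d/(E/2)) * s := by ring
            rw [h2]
            apply mul_le_mul_of_nonneg_right h1 (le_of_lt hs0)
        _ ≤ EMetric.infEdist (emb z) Vᶜ := hle
        _ ≤ edist (emb z) (emb q) := infEdist_le_edist_of_mem hq'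
        _ = edist z q := edist_emb z q
    refine le_trans hkey ?_
    exact le_iSup₂ (f := fun V (_ : V ∈ ⋃ i, (fun V => emb ⁻¹' V) '' F i) =>
      EMetric.infEdist z Vᶜ) (emb ⁻¹' V)
      (by simp only [mem_iUnion, mem_image]; exact ⟨i, V, hV, rfl⟩)


end AuxMain


/-- **Lemma (asprod>2).** If for some `ε̄ > 0` there is `δ : (0, ε̄) → (0, 1]` such that for
all `ε ∈ (0, ε̄)` and `τ ∈ (0, 1)` there is a `(δ(ε) τ, ε τ, k+1)`-covering of `Z × [0, τ]ⁿ`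
by open subsets of `Z × [0, ∞)ⁿ`, then `ℓ-dim (Z × [0,1]ⁿ) ≤ k`. -/
theorem elldim_le_of_coverings
    {Z : Type*} [MetricSpace Z] (n k : ℕ)
    (h : ∃ ε₀ : ℝ, 0 < ε₀ ∧ ∃ δ : ℝ → ℝ,
      (∀ ε : ℝ, 0 < ε → ε < ε₀ → 0 < δ ε ∧ δ ε ≤ 1) ∧
      ∀ ε : ℝ, 0 < ε → ε < ε₀ → ∀ τ : ℝ, 0 < τ → τ < 1 →
        ∃ U : Set (Set (Z × (Fin n → Set.Ici (0:ℝ)))),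
          IsLMNCover U {p : Z × (Fin n → Set.Ici (0:ℝ)) | ∀ i, (p.2 i : ℝ) ≤ τ}
            (δ ε * τ) (ε * τ) (k + 1)) :
    elldim (Z × (Fin n → Set.Icc (0:ℝ) 1)) ≤ (k : ℕ∞) := by
  obtain ⟨ε₀, hε₀, δ, hδ, hcov⟩ := h
  have hGood : ∀ j, j ≤ n → AuxMain.Good Z n k j := by
    intro j
    induction j with
    | zero => exact fun _ => AuxMain.good_zero ε₀ hε₀ δ hδ hcov
    | succ m ih => exact fun hm => AuxMain.good_step m (by omega) (ih (by omega))
  have hE := AuxMain.elldimLE_of_good (hGood n le_rfl)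
  exact sInf_le ⟨k, rfl, hE⟩
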